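/- Let L ≥ 2, and suppose v_l = w_l = γ_l > 0 may vary with l but satisfy γ_min ≤ γ_l ≤ γ_max. Then the Sub-LN depth factor (Σ_{l=1}^{L} 2)/(Σ_{n=1}^{L} γ_n²) + (1/Σ_{n=1}^{L} γ_n²)·Σ_{l=1}^{L} Σ_{k=2}^{L} 2·γ_k²/(Σ_{n=1}^{k−1} γ_n²) is at most (2/γ_min²)·(1 + (γ_max²/γ_min²)·(1 + log(L−1))). -/

import Mathlib

/-!
Every prefix energy `∑_{n<k} γ_n²` is at least `(k-1) γmin²` while `γ_k² ≤ γmax²`, so the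
`k`-th summand of the inner sum is at most `(γmax²/γmin²)/(k-1)` and the inner sum is controlled
by the harmonic number `H_{L-1} ≤ 1 + log (L-1)`. The outer sum over `l` only contributes a
factor `L`, which is absorbed by the total energy `∑ γ_n² ≥ L γmin²`.
-/

open Finset

lemma sum_Icc_two_one_div_pred_le_one_add_log (L : ℕ) (hL : 1 ≤ L) :
    ∑ k ∈ Icc 2 L, 1 / ((k - 1 : ℕ) : ℝ) ≤ 1 + Real.log ((L : ℝ) - 1) := by
  have hreindex : ∑ k ∈ Icc 2 L, 1 / ((k - 1 : ℕ) : ℝ) = harmonic (L - 1) := by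
    have hIcc : Icc 2 L = (Icc 1 (L - 1)).map (addRightEmbedding 1) := by
      rw [map_add_right_Icc, Nat.sub_add_cancel hL]
    rw [harmonic_eq_sum_Icc, hIcc, sum_map]
    simp
  rw [hreindex, ← Nat.cast_pred hL]
  exact harmonic_le_one_add_log _

lemma card_div_sum_le_one_div {ι : Type*} {s : Finset ι} {f : ι → ℝ} {m : ℝ} (hm : 0 < m)
    (hf : ∀ i ∈ s, m ≤ f i) : (#s : ℝ) / ∑ i ∈ s, f i ≤ 1 / m := by
  have hsum : #s * m ≤ ∑ i ∈ s, f i := by simpa using card_nsmul_le_sum s f m hf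
  refine div_le_of_le_mul₀ ((by positivity : (0 : ℝ) ≤ #s * m).trans hsum) (by positivity) ?_
  rwa [one_div_mul_eq_div, le_div_iff₀ hm]

lemma div_sum_le_div_card_mul {ι : Type*} {s : Finset ι} (hs : s.Nonempty) {f : ι → ℝ}
    {a b m : ℝ} (hm : 0 < m) (hf : ∀ i ∈ s, m ≤ f i) (ha : 0 ≤ a) (hab : a ≤ b) :
    a / ∑ i ∈ s, f i ≤ b / (#s * m) := by
  have hsum : #s * m ≤ ∑ i ∈ s, f i := by simpa using card_nsmul_le_sum s f m hf
  exact div_le_div₀ (ha.trans hab) hab (by have := hs.card_pos; positivity) hsum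

section
variable {L : ℕ} {γ : ℕ → ℝ} {γmin γmax : ℝ}

lemma sq_div_sum_sq_Icc_pred_le (hγmin : 0 < γmin)
    (hγ : ∀ l ∈ Icc 1 L, γmin ≤ γ l ∧ γ l ≤ γmax) {k : ℕ} (hk : k ∈ Icc 2 L) :
    γ k ^ 2 / ∑ n ∈ Icc 1 (k - 1), γ n ^ 2 ≤ γmax ^ 2 / γmin ^ 2 * (1 / ((k - 1 : ℕ) : ℝ)) := by
  rw [mem_Icc] at hk
  have hγk := hγ k (mem_Icc.mpr ⟨by omega, hk.2⟩)
  have hprefix : ∀ n ∈ Icc 1 (k - 1), γmin ^ 2 ≤ γ n ^ 2 := by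
    intro n hn
    rw [mem_Icc] at hn
    exact pow_le_pow_left₀ hγmin.le (hγ n (mem_Icc.mpr ⟨hn.1, by omega⟩)).1 2
  calc γ k ^ 2 / ∑ n ∈ Icc 1 (k - 1), γ n ^ 2
      ≤ γmax ^ 2 / (#(Icc 1 (k - 1)) * γmin ^ 2) :=
        div_sum_le_div_card_mul (nonempty_Icc.mpr (by omega)) (by positivity) hprefix
          (sq_nonneg _) (pow_le_pow_left₀ (hγmin.le.trans hγk.1) hγk.2 2)
    _ = γmax ^ 2 / γmin ^ 2 * (1 / ((k - 1 : ℕ) : ℝ)) := by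
        rw [Nat.card_Icc, Nat.add_sub_cancel]
        field_simp

lemma sum_sq_div_sum_sq_Icc_pred_le (hL : 1 ≤ L) (hγmin : 0 < γmin)
    (hγ : ∀ l ∈ Icc 1 L, γmin ≤ γ l ∧ γ l ≤ γmax) :
    ∑ k ∈ Icc 2 L, 2 * γ k ^ 2 / ∑ n ∈ Icc 1 (k - 1), γ n ^ 2 ≤
      2 * γmax ^ 2 / γmin ^ 2 * (1 + Real.log ((L : ℝ) - 1)) := by
  calc ∑ k ∈ Icc 2 L, 2 * γ k ^ 2 / ∑ n ∈ Icc 1 (k - 1), γ n ^ 2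
      ≤ ∑ k ∈ Icc 2 L, 2 * (γmax ^ 2 / γmin ^ 2 * (1 / ((k - 1 : ℕ) : ℝ))) := by
        refine sum_le_sum fun k hk => ?_
        rw [mul_div_assoc]
        exact mul_le_mul_of_nonneg_left (sq_div_sum_sq_Icc_pred_le hγmin hγ hk) zero_le_two
    _ = 2 * γmax ^ 2 / γmin ^ 2 * ∑ k ∈ Icc 2 L, 1 / ((k - 1 : ℕ) : ℝ) := by
        rw [mul_sum]; ring_nf
    _ ≤ 2 * γmax ^ 2 / γmin ^ 2 * (1 + Real.log ((L : ℝ) - 1)) := by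
        gcongr
        exact sum_Icc_two_one_div_pred_le_one_add_log L hL

end

theorem subln_depth_factor_robust (L : ℕ) (hL : 2 ≤ L) (γ : ℕ → ℝ)
    (γmin γmax : ℝ) (hγmin : 0 < γmin)
    (hγ : ∀ l ∈ Finset.Icc 1 L, γmin ≤ γ l ∧ γ l ≤ γmax) :
    (∑ _l ∈ Finset.Icc 1 L, (2 : ℝ)) / (∑ n ∈ Finset.Icc 1 L, (γ n) ^ 2)
      + (1 / ∑ n ∈ Finset.Icc 1 L, (γ n) ^ 2) *
        ∑ _l ∈ Finset.Icc 1 L, ∑ k ∈ Finset.Icc 2 L,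
          2 * (γ k) ^ 2 / (∑ n ∈ Finset.Icc 1 (k - 1), (γ n) ^ 2) ≤
    (2 / γmin ^ 2) * (1 + (γmax ^ 2 / γmin ^ 2) * (1 + Real.log ((L : ℝ) - 1))) := by
  set S := ∑ n ∈ Icc 1 L, γ n ^ 2
  set I := ∑ k ∈ Icc 2 L, 2 * γ k ^ 2 / ∑ n ∈ Icc 1 (k - 1), γ n ^ 2
  have hLS : (L : ℝ) / S ≤ 1 / γmin ^ 2 := by
    simpa using card_div_sum_le_one_div (s := Icc 1 L) (sq_pos_of_pos hγmin)
      fun l hl => pow_le_pow_left₀ hγmin.le (hγ l hl).1 2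
  have hI := sum_sq_div_sum_sq_Icc_pred_le (by omega) hγmin hγ
  have hI_nonneg : 0 ≤ I := by positivity
  simp only [sum_const, Nat.card_Icc, Nat.add_sub_cancel, nsmul_eq_mul]
  calc (L * 2 : ℝ) / S + 1 / S * (L * I) = 2 * (L / S) + L / S * I := by ring
    _ ≤ 2 * (1 / γmin ^ 2) +
          1 / γmin ^ 2 * (2 * γmax ^ 2 / γmin ^ 2 * (1 + Real.log (L - 1))) := by
        gcongr
    _ = _ := by ring
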